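/- Under the hypotheses of the vectorial fundamental transformation, the transformed data satisfy ∂/∂u_i (Ω(ξ,ξ*)^{-1}) = −Ω(ξ,ξ*)^{-1} (ξ_i ⊗ ξ*_i) Ω(ξ,ξ*)^{-1}, and consequently the scalar function σ_{jk} := ⟨ξ*_j, Ω(ξ,ξ*)^{-1} ξ_k⟩ satisfies, for i distinct from j and k, ∂σ_{jk}/∂u_i = β_{ij} σ_{ik} + σ_{ji} β_{ki} − σ_{ji} σ_{ik}. -/

import Mathlib

open scoped BigOperators

noncomputable def pd {N : ℕ} (i : Fin N) (f : (Fin N → ℝ) → ℝ) (u : Fin N → ℝ) : ℝ :=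
  fderiv ℝ f u (Pi.single i 1)

lemma pd_mul {N : ℕ} (i : Fin N) {f g : (Fin N → ℝ) → ℝ} (u : Fin N → ℝ)
    (hf : DifferentiableAt ℝ f u) (hg : DifferentiableAt ℝ g u) :
    pd i (fun v => f v * g v) u = pd i f u * g u + f u * pd i g u := by
  simp only [pd]
  rw [fderiv_fun_mul hf hg]
  simp [ContinuousLinearMap.add_apply, ContinuousLinearMap.smul_apply]
  ring

lemma pd_sum {N : ℕ} (i : Fin N) {α : Type*} (s : Finset α)
    (f : α → (Fin N → ℝ) → ℝ) (u : Fin N → ℝ)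
    (hf : ∀ a ∈ s, DifferentiableAt ℝ (f a) u) :
    pd i (fun v => ∑ a ∈ s, f a v) u = ∑ a ∈ s, pd i (f a) u := by
  simp only [pd]
  rw [fderiv_fun_sum hf]
  simp

theorem inverse_potential_derivative_and_sigma
    {N M : ℕ}
    (β : Fin N → Fin N → (Fin N → ℝ) → ℝ)
    (ξ : Fin N → (Fin N → ℝ) → Fin M → ℝ)
    (ξs : Fin N → (Fin N → ℝ) → Fin M → ℝ)
    (Ω Ωinv : (Fin N → ℝ) → Fin M → Fin M → ℝ)
    (σ : Fin N → Fin N → (Fin N → ℝ) → ℝ)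
    (hβ : ∀ i j, i ≠ j → ContDiff ℝ (⊤ : ℕ∞) (β i j))
    (hξ : ∀ i a, ContDiff ℝ (⊤ : ℕ∞) (fun u => ξ i u a))
    (hξssm : ∀ i a, ContDiff ℝ (⊤ : ℕ∞) (fun u => ξs i u a))
    (hΩsm : ∀ a b, ContDiff ℝ (⊤ : ℕ∞) (fun u => Ω u a b))
    (hΩinvsm : ∀ a b, ContDiff ℝ (⊤ : ℕ∞) (fun u => Ωinv u a b))
    (hDarboux : ∀ i j k, i ≠ j → j ≠ k → i ≠ k → ∀ u : Fin N → ℝ,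
      pd k (β i j) u = β i k u * β k j u)
    (hdirect : ∀ i j, i ≠ j → ∀ (u : Fin N → ℝ) (a : Fin M),
      pd i (fun v => ξ j v a) u = β j i u * ξ i u a)
    (hadjoint : ∀ i j, i ≠ j → ∀ (u : Fin N → ℝ) (a : Fin M),
      pd i (fun v => ξs j v a) u = β i j u * ξs i u a)
    (hΩ : ∀ i (u : Fin N → ℝ) (a b : Fin M),
      pd i (fun v => Ω v a b) u = ξ i u a * ξs i u b)
    (hinv₁ : ∀ (u : Fin N → ℝ) (a b : Fin M),
      ∑ c, Ω u a c * Ωinv u c b = if a = b then 1 else 0)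
    (hinv₂ : ∀ (u : Fin N → ℝ) (a b : Fin M),
      ∑ c, Ωinv u a c * Ω u c b = if a = b then 1 else 0)
    (hσ : ∀ j k (u : Fin N → ℝ),
      σ j k u = ∑ a, ∑ b, ξs j u a * Ωinv u a b * ξ k u b) :
    -- derivative of the inverse potential
    (∀ i (u : Fin N → ℝ) (a b : Fin M),
        pd i (fun v => Ωinv v a b) u
          = -∑ c, ∑ d, Ωinv u a c * (ξ i u c * ξs i u d) * Ωinv u d b)
    -- and the derived equation for σ
    ∧ (∀ i j k, i ≠ j → i ≠ k → ∀ u : Fin N → ℝ,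
        pd i (fun v => σ j k v) u
          = β i j u * σ i k u + σ j i u * β k i u - σ j i u * σ i k u) := by
  have hΩd : ∀ (a b : Fin M) (u : Fin N → ℝ), DifferentiableAt ℝ (fun v => Ω v a b) u :=
    fun a b u => ((hΩsm a b).differentiable (by simp)) u
  have hΩinvd : ∀ (a b : Fin M) (u : Fin N → ℝ), DifferentiableAt ℝ (fun v => Ωinv v a b) u :=
    fun a b u => ((hΩinvsm a b).differentiable (by simp)) u
  have hξd : ∀ (i : Fin N) (a : Fin M) (u : Fin N → ℝ),
      DifferentiableAt ℝ (fun v => ξ i v a) u :=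
    fun i a u => ((hξ i a).differentiable (by simp)) u
  have hξsd : ∀ (i : Fin N) (a : Fin M) (u : Fin N → ℝ),
      DifferentiableAt ℝ (fun v => ξs i v a) u :=
    fun i a u => ((hξssm i a).differentiable (by simp)) u
  -- key identity: ∑_c pd Ωinv a c * Ω c e = -∑_c Ωinv a c * ξ_i c * ξs_i e
  have key : ∀ (i : Fin N) (u : Fin N → ℝ) (a e : Fin M),
      ∑ c, pd i (fun v => Ωinv v a c) u * Ω u c e
        = -∑ c, Ωinv u a c * (ξ i u c * ξs i u e) := by
    intro i u a e
    have hconst : (fun v => ∑ c, Ωinv v a c * Ω v c e)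
        = fun _ => (if a = e then (1:ℝ) else 0) := funext fun v => hinv₂ v a e
    have h0 : pd i (fun v => ∑ c, Ωinv v a c * Ω v c e) u = 0 := by
      rw [hconst]; simp [pd]
    rw [pd_sum i Finset.univ (fun c v => Ωinv v a c * Ω v c e) u
      (fun c _ => ((hΩinvd a c u).mul (hΩd c e u)))] at h0
    have h1 : ∀ c : Fin M, pd i (fun v => Ωinv v a c * Ω v c e) u
        = pd i (fun v => Ωinv v a c) u * Ω u c e + Ωinv u a c * (ξ i u c * ξs i u e) := by
      intro c
      rw [pd_mul i u (hΩinvd a c u) (hΩd c e u), hΩ i u c e]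
    simp only [h1, Finset.sum_add_distrib] at h0
    linarith [h0]
  have part1 : ∀ (i : Fin N) (u : Fin N → ℝ) (a b : Fin M),
      pd i (fun v => Ωinv v a b) u
        = -∑ c, ∑ d, Ωinv u a c * (ξ i u c * ξs i u d) * Ωinv u d b := by
    intro i u a b
    have step : pd i (fun v => Ωinv v a b) u
        = ∑ e, pd i (fun v => Ωinv v a e) u * (∑ c, Ω u e c * Ωinv u c b) := by
      simp only [hinv₁]
      rw [Finset.sum_eq_single b]
      · simp
      · intro e _ he; simp [he]
      · simp
    rw [step]
    have swap : ∑ e, pd i (fun v => Ωinv v a e) u * (∑ c, Ω u e c * Ωinv u c b)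
        = ∑ c, (∑ e, pd i (fun v => Ωinv v a e) u * Ω u e c) * Ωinv u c b := by
      simp only [Finset.mul_sum, Finset.sum_mul]
      rw [Finset.sum_comm]
      exact Finset.sum_congr rfl fun c _ => Finset.sum_congr rfl fun e _ => by ring
    rw [swap]
    simp only [key i u a]
    simp only [neg_mul, Finset.sum_neg_distrib, Finset.sum_mul, neg_inj]
    rw [Finset.sum_comm]
  refine ⟨part1, ?_⟩
  intro i j k hij hik u
  have hfun : (fun v => σ j k v)
      = fun v => ∑ a, ∑ b, ξs j v a * Ωinv v a b * ξ k v b :=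
    funext fun v => hσ j k v
  rw [hfun]
  have hd2 : ∀ (a b : Fin M) (u : Fin N → ℝ),
      DifferentiableAt ℝ (fun v => ξs j v a * Ωinv v a b * ξ k v b) u :=
    fun a b u => ((hξsd j a u).mul (hΩinvd a b u)).mul (hξd k b u)
  rw [pd_sum i Finset.univ _ u (fun a _ => by
    exact DifferentiableAt.fun_sum (fun b _ => hd2 a b u))]
  have hterm : ∀ a b : Fin M,
      pd i (fun v => ξs j v a * Ωinv v a b * ξ k v b) u
        = β i j u * (ξs i u a * Ωinv u a b * ξ k u b)
          + ξs j u a * (-∑ c, ∑ d, Ωinv u a c * (ξ i u c * ξs i u d) * Ωinv u d b) * ξ k u b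
          + β k i u * (ξs j u a * Ωinv u a b * ξ i u b) := by
    intro a b
    rw [pd_mul i u ((hξsd j a u).fun_mul (hΩinvd a b u)) (hξd k b u),
        pd_mul i u (hξsd j a u) (hΩinvd a b u),
        hadjoint i j hij u a, hdirect i k hik u b, part1 i u a b]
    ring
  have hsum : ∀ a : Fin M,
      pd i (fun v => ∑ b, ξs j v a * Ωinv v a b * ξ k v b) u
        = ∑ b, pd i (fun v => ξs j v a * Ωinv v a b * ξ k v b) u :=
    fun a => pd_sum i Finset.univ _ u (fun b _ => hd2 a b u)
  simp only [hsum, hterm, Finset.sum_add_distrib]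
  have P1 : ∑ a, ∑ b, β i j u * (ξs i u a * Ωinv u a b * ξ k u b)
      = β i j u * σ i k u := by
    rw [hσ i k u, Finset.mul_sum]
    exact Finset.sum_congr rfl fun a _ => by rw [Finset.mul_sum]
  have P3 : ∑ a, ∑ b, β k i u * (ξs j u a * Ωinv u a b * ξ i u b)
      = σ j i u * β k i u := by
    rw [hσ j i u]
    simp only [Finset.sum_mul]
    exact Finset.sum_congr rfl fun a _ => Finset.sum_congr rfl fun b _ => by ring
  have factor : ∀ a b : Fin M,
      (∑ c, ∑ d, Ωinv u a c * (ξ i u c * ξs i u d) * Ωinv u d b)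
        = (∑ c, Ωinv u a c * ξ i u c) * (∑ d, ξs i u d * Ωinv u d b) := by
    intro a b
    rw [Finset.sum_mul_sum]
    exact Finset.sum_congr rfl fun c _ => Finset.sum_congr rfl fun d _ => by ring
  have P2 : ∑ a, ∑ b, ξs j u a
        * (-∑ c, ∑ d, Ωinv u a c * (ξ i u c * ξs i u d) * Ωinv u d b) * ξ k u b
      = -(σ j i u * σ i k u) := by
    calc ∑ a, ∑ b, ξs j u a
          * (-∑ c, ∑ d, Ωinv u a c * (ξ i u c * ξs i u d) * Ωinv u d b) * ξ k u b
        = -((∑ a, ξs j u a * (∑ c, Ωinv u a c * ξ i u c))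
            * (∑ b, (∑ d, ξs i u d * Ωinv u d b) * ξ k u b)) := by
          simp only [factor, mul_neg, neg_mul, Finset.sum_neg_distrib, neg_inj]
          rw [Finset.sum_mul_sum]
          exact Finset.sum_congr rfl fun a _ => Finset.sum_congr rfl fun b _ => by ring
      _ = -(σ j i u * σ i k u) := by
          have e1 : (∑ a, ξs j u a * (∑ c, Ωinv u a c * ξ i u c)) = σ j i u := by
            rw [hσ j i u]
            simp only [Finset.mul_sum]
            exact Finset.sum_congr rfl fun a _ => Finset.sum_congr rfl fun c _ => by ring
          have e2 : (∑ b, (∑ d, ξs i u d * Ωinv u d b) * ξ k u b) = σ i k u := by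
            rw [hσ i k u, Finset.sum_comm]
            simp only [Finset.sum_mul]
          rw [e1, e2]
  rw [P1, P2, P3]
  ring
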